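/- arXiv:1506.03172 — 5 statements merged into one kernel-verified Lean document; each statement's English description precedes it below -/
import Mathlib

section
/- Let A be an m×n design matrix and let u, v ∈ ℤⁿ_{≥0} be nonzero data vectors such that A·(u/|u|₁) = A·(v/|v|₁). Then the set of maximizers of the likelihood function f_u over Θ equals the set of maximizers of f_v over Θ; in particular u and v have the same maximum likelihood estimators. -/
/-!
Writing `s_u := A u ∈ ℤᵐ`, the likelihood is `f_u(θ) = c_u ∏ᵢ θᵢ^(s_u)ᵢ` with `c_u > 0`.
The hypothesis says `|v|₁ s_u = |u|₁ s_v`, hence `(f_u / c_u)^|v|₁ = (f_v / c_v)^|u|₁` on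
the positive orthant. Positive powers are strictly monotone, so `f_u` and `f_v` induce the same
order on `Θ` and therefore have the same maximizers.
-/

open scoped BigOperators

noncomputable section

/-- `A` is a design matrix: all column sums are equal. -/
def IsDesign {m n : ℕ} (A : Matrix (Fin m) (Fin n) ℤ) : Prop :=
  ∃ c : ℤ, ∀ j, ∑ i, A i j = c

/-- The parameter space Θ of the toric model of `A`. -/
def paramSpace {m n : ℕ} (A : Matrix (Fin m) (Fin n) ℤ) : Set (Fin m → ℝ) :=
  {θ | (∀ i, 0 < θ i) ∧ ∑ j, ∏ i, θ i ^ A i j = 1}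

/-- The likelihood function `f_u(θ) = (|u|₁!/(u₁!⋯uₙ!)) ∏_j p_j(θ)^{u_j}`. -/
def likelihood {m n : ℕ} (A : Matrix (Fin m) (Fin n) ℤ) (u : Fin n → ℕ)
    (θ : Fin m → ℝ) : ℝ :=
  (Nat.multinomial Finset.univ u : ℝ) * ∏ j, (∏ i, θ i ^ A i j) ^ u j

open Finset Matrix

lemma prod_zpow_eq_zpow_sum₀ {ι G : Type*} [CommGroupWithZero G] {x : G} (hx : x ≠ 0)
    (s : Finset ι) (c : ι → ℤ) : ∏ j ∈ s, x ^ c j = x ^ ∑ j ∈ s, c j := by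
  classical
  induction s using Finset.induction with
  | empty => simp
  | insert _ _ h ih => rw [sum_insert h, prod_insert h, zpow_add₀ hx, ih]

section Monomial

variable {ι κ G : Type*} [Fintype ι] [Fintype κ] [CommGroupWithZero G]

lemma prod_monomial_pow_eq_monomial_mulVec (A : Matrix ι κ ℤ) (u : κ → ℕ) {θ : ι → G}
    (hθ : ∀ i, θ i ≠ 0) :
    ∏ j, (∏ i, θ i ^ A i j) ^ u j = ∏ i, θ i ^ (A *ᵥ fun j ↦ (u j : ℤ)) i := by
  simp_rw [← prod_pow, ← zpow_natCast, ← _root_.zpow_mul]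
  rw [prod_comm]
  refine prod_congr rfl fun i _ ↦ ?_
  rw [prod_zpow_eq_zpow_sum₀ (hθ i)]
  rfl

lemma monomial_pow (s : ι → ℤ) (θ : ι → G) (N : ℕ) :
    (∏ i, θ i ^ s i) ^ N = ∏ i, θ i ^ (s i * N) := by
  simp_rw [← prod_pow, ← zpow_natCast, ← _root_.zpow_mul]

end Monomial

lemma sum_pos_of_ne_zero {κ : Type*} [Fintype κ] {u : κ → ℕ} (hu : u ≠ 0) : 0 < ∑ j, u j :=
  Nat.pos_of_ne_zero fun h ↦ hu <| funext fun j ↦ sum_eq_zero_iff.mp h j (mem_univ j)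

section SufficientStatistic

variable {ι κ : Type*} [Fintype κ] (A : Matrix ι κ ℤ) {u v : κ → ℕ}

lemma mulVec_mul_sum_eq_of_normalized_eq (hu : u ≠ 0) (hv : v ≠ 0)
    (huv : ∀ i, ∑ j, (A i j : ℝ) * ((u j : ℝ) / ((∑ j', u j' : ℕ) : ℝ)) =
               ∑ j, (A i j : ℝ) * ((v j : ℝ) / ((∑ j', v j' : ℕ) : ℝ))) (i : ι) :
    (A *ᵥ fun j ↦ (u j : ℤ)) i * (∑ j, v j : ℕ) =
      (A *ᵥ fun j ↦ (v j : ℤ)) i * (∑ j, u j : ℕ) := by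
  have hU : ((∑ j, u j : ℕ) : ℝ) ≠ 0 := Nat.cast_ne_zero.mpr (sum_pos_of_ne_zero hu).ne'
  have hV : ((∑ j, v j : ℕ) : ℝ) ≠ 0 := Nat.cast_ne_zero.mpr (sum_pos_of_ne_zero hv).ne'
  have h := huv i
  simp_rw [← mul_div_assoc, ← sum_div, div_eq_div_iff hU hV] at h
  simp only [mulVec, dotProduct]
  exact_mod_cast h

lemma monomial_pow_eq_of_mulVec_mul_eq [Fintype ι] {N M : ℕ}
    (hNM : ∀ i, (A *ᵥ fun j ↦ (u j : ℤ)) i * N = (A *ᵥ fun j ↦ (v j : ℤ)) i * M)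
    {G : Type*} [CommGroupWithZero G] {θ : ι → G} (hθ : ∀ i, θ i ≠ 0) :
    (∏ j, (∏ i, θ i ^ A i j) ^ u j) ^ N = (∏ j, (∏ i, θ i ^ A i j) ^ v j) ^ M := by
  rw [prod_monomial_pow_eq_monomial_mulVec A u hθ, prod_monomial_pow_eq_monomial_mulVec A v hθ,
    monomial_pow, monomial_pow]
  simp_rw [hNM]

end SufficientStatistic

lemma likelihood_le_likelihood_iff_of_mulVec_mul_eq {m n N M : ℕ} (A : Matrix (Fin m) (Fin n) ℤ)
    {u v : Fin n → ℕ} (hN : N ≠ 0) (hM : M ≠ 0)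
    (hNM : ∀ i, (A *ᵥ fun j ↦ (u j : ℤ)) i * N = (A *ᵥ fun j ↦ (v j : ℤ)) i * M)
    {θ θ' : Fin m → ℝ} (hθ : ∀ i, 0 < θ i) (hθ' : ∀ i, 0 < θ' i) :
    likelihood A u θ' ≤ likelihood A u θ ↔ likelihood A v θ' ≤ likelihood A v θ := by
  have hnonneg (w : Fin n → ℕ) {θ : Fin m → ℝ} (hθ : ∀ i, 0 < θ i) :
      0 ≤ ∏ j, (∏ i, θ i ^ A i j) ^ w j :=
    prod_nonneg fun j _ ↦ pow_nonneg (prod_nonneg fun i _ ↦ (zpow_pos (hθ i) _).le) _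
  unfold likelihood
  rw [mul_le_mul_iff_right₀ (by exact_mod_cast Nat.multinomial_pos _ _),
    mul_le_mul_iff_right₀ (by exact_mod_cast Nat.multinomial_pos _ _),
    ← pow_le_pow_iff_left₀ (hnonneg u hθ') (hnonneg u hθ) hN,
    ← pow_le_pow_iff_left₀ (hnonneg v hθ') (hnonneg v hθ) hM,
    monomial_pow_eq_of_mulVec_mul_eq A hNM fun i ↦ (hθ i).ne',
    monomial_pow_eq_of_mulVec_mul_eq A hNM fun i ↦ (hθ' i).ne']

theorem stmt0_general {m n : ℕ} (A : Matrix (Fin m) (Fin n) ℤ)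
    (u v : Fin n → ℕ) (hu : u ≠ 0) (hv : v ≠ 0)
    (huv : ∀ i, ∑ j, (A i j : ℝ) * ((u j : ℝ) / ((∑ j', u j' : ℕ) : ℝ)) =
               ∑ j, (A i j : ℝ) * ((v j : ℝ) / ((∑ j', v j' : ℕ) : ℝ))) :
    {θ ∈ paramSpace A | IsMaxOn (likelihood A u) (paramSpace A) θ} =
    {θ ∈ paramSpace A | IsMaxOn (likelihood A v) (paramSpace A) θ} := by
  have hsuff := mulVec_mul_sum_eq_of_normalized_eq A hu hv huv
  ext θ
  refine and_congr_right fun hθ ↦ forall₂_congr fun θ' hθ' ↦ ?_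
  exact likelihood_le_likelihood_iff_of_mulVec_mul_eq A (sum_pos_of_ne_zero hv).ne'
    (sum_pos_of_ne_zero hu).ne' hsuff hθ.1 hθ'.1

theorem stmt0 {m n : ℕ} (A : Matrix (Fin m) (Fin n) ℤ) (hA : IsDesign A)
    (u v : Fin n → ℕ) (hu : u ≠ 0) (hv : v ≠ 0)
    (huv : ∀ i, ∑ j, (A i j : ℝ) * ((u j : ℝ) / ((∑ j', u j' : ℕ) : ℝ)) =
               ∑ j, (A i j : ℝ) * ((v j : ℝ) / ((∑ j', v j' : ℕ) : ℝ))) :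
    {θ ∈ paramSpace A | IsMaxOn (likelihood A u) (paramSpace A) θ} =
    {θ ∈ paramSpace A | IsMaxOn (likelihood A v) (paramSpace A) θ} :=
  stmt0_general A u v hu hv huv
end
end

section
/- Let A be an m×n design matrix and u ∈ ℤⁿ_{≥0} a nonzero data vector such that the sufficient polytope P_A(u) is nonempty. Then there is a unique point p̃ ∈ P_A(u) at which Shannon entropy H, viewed as a real-valued function on the closure of P_A(u), attains its maximum; in particular the maximizer of H over the closure of P_A(u) exists, is unique, and lies in the relative interior set P_A(u) itself. -/
/- STATEMENT 1: If the sufficient polytope P_A(u) is nonempty, Shannon entropy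
   attains its maximum over the closure of P_A(u) at a unique point, and this
   point lies in P_A(u) itself. -/

open scoped BigOperators

noncomputable section

/-- The sufficient polytope `P_A(u) = {p ∈ ri(Δⁿ) | A p = A (u/|u|₁)}`. -/
def suffPolytope {m n : ℕ} (A : Matrix (Fin m) (Fin n) ℤ) (u : Fin n → ℕ) :
    Set (Fin n → ℝ) :=
  {p | (∀ j, 0 < p j) ∧ ∑ j, p j = 1 ∧
    ∀ i, ∑ j, (A i j : ℝ) * p j = ∑ j, (A i j : ℝ) * ((u j : ℝ) / ((∑ j', u j' : ℕ) : ℝ))}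

/-- Shannon entropy `H(p) = -∑ p_i log p_i` (the convention `0 log 0 = 0` holds
    since `Real.log 0 = 0`). -/
def shannonH {n : ℕ} (p : Fin n → ℝ) : ℝ := -∑ j, p j * Real.log (p j)

lemma shannonH_eq {n : ℕ} (p : Fin n → ℝ) :
    shannonH p = ∑ j, Real.negMulLog (p j) := by
  simp [shannonH, Real.negMulLog, neg_mul, Finset.sum_neg_distrib]

lemma continuous_shannonH {n : ℕ} : Continuous (shannonH (n := n)) := by
  have : (shannonH (n := n)) = fun p => ∑ j, Real.negMulLog (p j) := by
    funext p; exact shannonH_eq p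
  rw [this]
  exact continuous_finset_sum _ fun j _ =>
    Real.continuous_negMulLog.comp (continuous_apply j)

lemma convex_suffPolytope {m n : ℕ} (A : Matrix (Fin m) (Fin n) ℤ) (u : Fin n → ℕ) :
    Convex ℝ (suffPolytope A u) := by
  intro p hp r hr a b ha hb hab
  refine ⟨?_, ?_, ?_⟩
  · intro j
    rcases ha.eq_or_lt with h | h
    · have hb1 : b = 1 := by linarith
      simp [← h, hb1, Pi.add_apply, hr.1 j]
    · have h1 : 0 < a * p j := mul_pos h (hp.1 j)
      have h2 : 0 ≤ b * r j := mul_nonneg hb (hr.1 j).le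
      have : (0:ℝ) < a * p j + b * r j := by linarith
      simpa [Pi.add_apply, smul_eq_mul] using this
  · have : ∑ j, (a * p j + b * r j) = a * (∑ j, p j) + b * ∑ j, r j := by
      rw [Finset.mul_sum, Finset.mul_sum, ← Finset.sum_add_distrib]
    simpa [Pi.add_apply, smul_eq_mul, this, hp.2.1, hr.2.1] using hab
  · intro i
    have h1 : ∑ j, (A i j : ℝ) * (a * p j + b * r j)
        = a * (∑ j, (A i j : ℝ) * p j) + b * ∑ j, (A i j : ℝ) * r j := by
      rw [Finset.mul_sum, Finset.mul_sum, ← Finset.sum_add_distrib]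
      exact Finset.sum_congr rfl fun j _ => by ring
    have h2 : ∑ j, (A i j : ℝ) * ((a • p + b • r) j)
        = a * (∑ j, (A i j : ℝ) * p j) + b * ∑ j, (A i j : ℝ) * r j := by
      simpa [Pi.add_apply, smul_eq_mul] using h1
    rw [h2, hp.2.2 i, hr.2.2 i, ← add_mul, hab, one_mul]

theorem stmt1 {m n : ℕ} (A : Matrix (Fin m) (Fin n) ℤ) (hA : IsDesign A)
    (u : Fin n → ℕ) (hu : u ≠ 0) (hne : (suffPolytope A u).Nonempty) :
    ∃ ptilde ∈ suffPolytope A u,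
      IsMaxOn shannonH (closure (suffPolytope A u)) ptilde ∧
      ∀ q ∈ closure (suffPolytope A u),
        IsMaxOn shannonH (closure (suffPolytope A u)) q → q = ptilde := by
  classical
  set S := suffPolytope A u with hSdef
  set K := closure S with hKdef
  have hKconv : Convex ℝ K := (convex_suffPolytope A u).closure
  -- The closed superset containing all constraints
  set C : Set (Fin n → ℝ) :=
    {p | (∀ j, 0 ≤ p j) ∧ ∑ j, p j = 1 ∧
      ∀ i, ∑ j, (A i j : ℝ) * p j
        = ∑ j, (A i j : ℝ) * ((u j : ℝ) / ((∑ j', u j' : ℕ) : ℝ))} with hCdef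
  have hCclosed : IsClosed C := by
    have h1 : IsClosed {p : Fin n → ℝ | ∀ j, 0 ≤ p j} := by
      have : {p : Fin n → ℝ | ∀ j, 0 ≤ p j} = ⋂ j, {p | 0 ≤ p j} := by
        ext p; simp [Set.mem_iInter]
      rw [this]
      exact isClosed_iInter fun j => isClosed_le continuous_const (continuous_apply j)
    have h2 : IsClosed {p : Fin n → ℝ | ∑ j, p j = 1} :=
      isClosed_eq (continuous_finset_sum _ fun j _ => continuous_apply j) continuous_const
    have h3 : IsClosed {p : Fin n → ℝ | ∀ i, ∑ j, (A i j : ℝ) * p j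
        = ∑ j, (A i j : ℝ) * ((u j : ℝ) / ((∑ j', u j' : ℕ) : ℝ))} := by
      have : {p : Fin n → ℝ | ∀ i, ∑ j, (A i j : ℝ) * p j
          = ∑ j, (A i j : ℝ) * ((u j : ℝ) / ((∑ j', u j' : ℕ) : ℝ))}
          = ⋂ i, {p | ∑ j, (A i j : ℝ) * p j
          = ∑ j, (A i j : ℝ) * ((u j : ℝ) / ((∑ j', u j' : ℕ) : ℝ))} := by
        ext p; simp [Set.mem_iInter]
      rw [this]
      exact isClosed_iInter fun i => isClosed_eq
        (continuous_finset_sum _ fun j _ => (continuous_const.mul (continuous_apply j))) continuous_const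
    have : C = {p : Fin n → ℝ | ∀ j, 0 ≤ p j} ∩ ({p : Fin n → ℝ | ∑ j, p j = 1} ∩
        {p : Fin n → ℝ | ∀ i, ∑ j, (A i j : ℝ) * p j
        = ∑ j, (A i j : ℝ) * ((u j : ℝ) / ((∑ j', u j' : ℕ) : ℝ))}) := by
      ext p; simp [hCdef, Set.mem_inter_iff, Set.mem_setOf_eq, and_assoc]
    rw [this]
    exact h1.inter (h2.inter h3)
  have hSC : S ⊆ C := fun p hp => ⟨fun j => (hp.1 j).le, hp.2.1, hp.2.2⟩
  have hKC : K ⊆ C := closure_minimal hSC hCclosed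
  -- K is compact
  have hKbox : K ⊆ Set.pi Set.univ (fun _ : Fin n => Set.Icc (0:ℝ) 1) := by
    intro p hp j _
    have hC := hKC hp
    refine ⟨hC.1 j, ?_⟩
    have : p j ≤ ∑ j', p j' :=
      Finset.single_le_sum (fun i _ => hC.1 i) (Finset.mem_univ j)
    rw [hC.2.1] at this; exact this
  have hKcomp : IsCompact K :=
    IsCompact.of_isClosed_subset (isCompact_univ_pi fun _ => isCompact_Icc)
      isClosed_closure hKbox
  have hKne : K.Nonempty := hne.closure
  obtain ⟨q, hqK, hqmax⟩ :=
    hKcomp.exists_isMaxOn hKne continuous_shannonH.continuousOn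
  -- nonnegativity of coordinates on K
  have hnn : ∀ x ∈ K, ∀ j, (0:ℝ) ≤ x j := fun x hx j => (hKC hx).1 j
  -- q has positive coordinates
  have hq_pos : ∀ j, 0 < q j := by
    by_contra hcon
    push_neg at hcon
    obtain ⟨j₀, hj₀⟩ := hcon
    have hq0 : q j₀ = 0 := le_antisymm hj₀ (hnn q hqK j₀)
    obtain ⟨p, hpS⟩ := hne
    have hpK : p ∈ K := subset_closure hpS
    set c : ℝ := p j₀ with hcdef
    have hc : 0 < c := hpS.1 j₀
    set t : ℝ := min (1/2) (Real.exp ((shannonH p - shannonH q)/c - 1)) with htdef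
    have ht0 : 0 < t := lt_min (by norm_num) (Real.exp_pos _)
    have ht1 : t < 1 := lt_of_le_of_lt (min_le_left _ _) (by norm_num)
    have hlogt : Real.log t ≤ (shannonH p - shannonH q)/c - 1 := by
      have := Real.log_le_log ht0 (min_le_right (1/2)
        (Real.exp ((shannonH p - shannonH q)/c - 1)))
      rwa [Real.log_exp] at this
    have hkey : c * Real.log t < shannonH p - shannonH q := by
      have h1 : c * Real.log t ≤ c * ((shannonH p - shannonH q)/c - 1) :=
        mul_le_mul_of_nonneg_left hlogt hc.le
      have h2 : c * ((shannonH p - shannonH q)/c - 1) = (shannonH p - shannonH q) - c := by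
        field_simp
      nlinarith
    set x : Fin n → ℝ := (1 - t) • q + t • p with hxdef
    have hxK : x ∈ K := hKconv hqK hpK (by linarith) ht0.le (by ring)
    have hxj : ∀ j, x j = (1 - t) * q j + t * p j := by
      intro j; simp [hxdef, Pi.add_apply, smul_eq_mul]
    -- per-coordinate concavity bounds
    have hterm : ∀ j ∈ Finset.univ.erase j₀,
        (1 - t) * Real.negMulLog (q j) + t * Real.negMulLog (p j)
          ≤ Real.negMulLog (x j) := by
      intro j _
      have := Real.concaveOn_negMulLog.2 (Set.mem_Ici.2 (hnn q hqK j))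
        (Set.mem_Ici.2 (hpS.1 j).le) (by linarith : (0:ℝ) ≤ 1 - t) ht0.le (by ring)
      simpa [smul_eq_mul, hxj j] using this
    have hj0term : Real.negMulLog (x j₀)
        = (1 - t) * Real.negMulLog (q j₀) + t * Real.negMulLog (p j₀)
          + t * c * (-Real.log t) := by
      have hx0 : x j₀ = t * c := by rw [hxj j₀, hq0]; ring
      rw [hx0, Real.negMulLog_mul, hq0]
      simp [Real.negMulLog]
      ring
    have hsum : shannonH q + t * (shannonH p - shannonH q - c * Real.log t)
        ≤ shannonH x := by
      have e1 : shannonH x = Real.negMulLog (x j₀)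
          + ∑ j ∈ Finset.univ.erase j₀, Real.negMulLog (x j) := by
        rw [shannonH_eq, ← Finset.add_sum_erase _ _ (Finset.mem_univ j₀)]
      have e2 : ∀ r : Fin n → ℝ, shannonH r = Real.negMulLog (r j₀)
          + ∑ j ∈ Finset.univ.erase j₀, Real.negMulLog (r j) := by
        intro r
        rw [shannonH_eq, ← Finset.add_sum_erase _ _ (Finset.mem_univ j₀)]
      have hsle : ∑ j ∈ Finset.univ.erase j₀,
          ((1 - t) * Real.negMulLog (q j) + t * Real.negMulLog (p j))
          ≤ ∑ j ∈ Finset.univ.erase j₀, Real.negMulLog (x j) :=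
        Finset.sum_le_sum hterm
      have hsplit : ∑ j ∈ Finset.univ.erase j₀,
          ((1 - t) * Real.negMulLog (q j) + t * Real.negMulLog (p j))
          = (1 - t) * ∑ j ∈ Finset.univ.erase j₀, Real.negMulLog (q j)
            + t * ∑ j ∈ Finset.univ.erase j₀, Real.negMulLog (p j) := by
        rw [Finset.mul_sum, Finset.mul_sum, ← Finset.sum_add_distrib]
      rw [e1, hj0term]
      have hq' := e2 q
      have hp' := e2 p
      nlinarith [hsle, hsplit]
    have hgain : 0 < t * (shannonH p - shannonH q - c * Real.log t) :=
      mul_pos ht0 (by linarith)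
    have hle := isMaxOn_iff.mp hqmax x hxK
    linarith
  have hqS : q ∈ S := ⟨hq_pos, (hKC hqK).2.1, (hKC hqK).2.2⟩
  refine ⟨q, hqS, hqmax, ?_⟩
  -- uniqueness via strict concavity
  intro r hrK hrmax
  by_contra hne'
  obtain ⟨j₁, hj₁⟩ := Function.ne_iff.mp hne'
  set z : Fin n → ℝ := (1/2 : ℝ) • r + (1/2 : ℝ) • q with hzdef
  have hzK : z ∈ K := hKconv hrK hqK (by norm_num) (by norm_num) (by norm_num)
  have hzj : ∀ j, z j = (1/2) * r j + (1/2) * q j := by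
    intro j; simp [hzdef, Pi.add_apply, smul_eq_mul]
  have hHeq : shannonH r = shannonH q :=
    le_antisymm (isMaxOn_iff.mp hqmax r hrK) (isMaxOn_iff.mp hrmax q hqK)
  have hlt : ∑ j, ((1/2) * Real.negMulLog (r j) + (1/2) * Real.negMulLog (q j))
      < ∑ j, Real.negMulLog (z j) := by
    refine Finset.sum_lt_sum (fun j _ => ?_) ⟨j₁, Finset.mem_univ j₁, ?_⟩
    · have := Real.concaveOn_negMulLog.2 (Set.mem_Ici.2 (hnn r hrK j))
        (Set.mem_Ici.2 (hq_pos j).le) (by norm_num : (0:ℝ) ≤ 1/2)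
        (by norm_num : (0:ℝ) ≤ 1/2) (by norm_num)
      simpa [smul_eq_mul, hzj j] using this
    · have := Real.strictConcaveOn_negMulLog.2 (Set.mem_Ici.2 (hnn r hrK j₁))
        (Set.mem_Ici.2 (hq_pos j₁).le) hj₁ (by norm_num : (0:ℝ) < 1/2)
        (by norm_num : (0:ℝ) < 1/2) (by norm_num)
      simpa [smul_eq_mul, hzj j₁] using this
  have hzH : shannonH q < shannonH z := by
    have h1 : ∑ j, ((1/2) * Real.negMulLog (r j) + (1/2) * Real.negMulLog (q j))
        = (1/2) * shannonH r + (1/2) * shannonH q := by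
      rw [shannonH_eq, shannonH_eq, Finset.mul_sum, Finset.mul_sum,
        ← Finset.sum_add_distrib]
    rw [shannonH_eq (p := z)]
    rw [h1, hHeq] at hlt
    linarith
  have := isMaxOn_iff.mp hqmax z hzK
  linarith
end
end

section
/- Let A be an m×n design matrix and q ∈ ri(Δⁿ). Then q lies in the image p_A(Θ) of the toric model if and only if the vector (log q₁, …, log qₙ) lies in the real span of the rows of A. -/
open scoped BigOperators

noncomputable section

/-- The toric model map `p_A`, with `p_j(θ) = θ^{a_j}`. -/
def toricModel {m n : ℕ} (A : Matrix (Fin m) (Fin n) ℤ) (θ : Fin m → ℝ) :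
    Fin n → ℝ := fun j => ∏ i, θ i ^ A i j

open Real

theorem Real.log_prod_zpow {ι : Type*} (s : Finset ι) {θ : ι → ℝ} (hθ : ∀ i ∈ s, 0 < θ i)
    (a : ι → ℤ) : log (∏ i ∈ s, θ i ^ a i) = ∑ i ∈ s, log (θ i) * a i := by
  rw [log_prod fun i hi => (zpow_pos (hθ i hi) _).ne']
  exact Finset.sum_congr rfl fun i _ => by rw [log_zpow, mul_comm]

theorem Real.prod_exp_zpow {ι : Type*} (s : Finset ι) (c : ι → ℝ) (a : ι → ℤ) :
    ∏ i ∈ s, exp (c i) ^ a i = exp (∑ i ∈ s, c i * a i) := by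
  rw [exp_sum]
  exact Finset.prod_congr rfl fun i _ => by rw [exp_mul, rpow_intCast]

section ToricModel

variable {m n : ℕ} (A : Matrix (Fin m) (Fin n) ℤ)

theorem log_toricModel {θ : Fin m → ℝ} (hθ : ∀ i, 0 < θ i) :
    (fun j => log (toricModel A θ j)) = ∑ i, log (θ i) • fun j => (A i j : ℝ) := by
  funext j
  simp only [toricModel, Finset.sum_apply, Pi.smul_apply, smul_eq_mul]
  exact log_prod_zpow _ (fun i _ => hθ i) _

theorem toricModel_exp (c : Fin m → ℝ) :
    toricModel A (fun i => exp (c i)) = fun j => exp (∑ i, c i * A i j) :=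
  funext fun _ => prod_exp_zpow _ c _

end ToricModel

theorem stmt4_general {m n : ℕ} (A : Matrix (Fin m) (Fin n) ℤ)
    (q : Fin n → ℝ) (hqpos : ∀ j, 0 < q j) (hqsum : ∑ j, q j = 1) :
    (∃ θ ∈ paramSpace A, q = toricModel A θ) ↔
      (fun j => Real.log (q j)) ∈
        Submodule.span ℝ (Set.range fun i : Fin m => fun j : Fin n => (A i j : ℝ)) := by
  rw [Submodule.mem_span_range_iff_exists_fun ℝ]
  constructor
  · rintro ⟨θ, ⟨hθ, -⟩, rfl⟩
    exact ⟨_, (log_toricModel A hθ).symm⟩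
  · rintro ⟨c, hc⟩
    have hq : toricModel A (fun i => exp (c i)) = q := by
      funext j
      rw [toricModel_exp, ← exp_log (hqpos j), ← congrFun hc j]
      simp only [Finset.sum_apply, Pi.smul_apply, smul_eq_mul]
    refine ⟨_, ⟨fun i => exp_pos _, ?_⟩, hq.symm⟩
    rw [← hqsum, ← hq]
    rfl

theorem stmt4 {m n : ℕ} (A : Matrix (Fin m) (Fin n) ℤ) (hA : IsDesign A)
    (q : Fin n → ℝ) (hqpos : ∀ j, 0 < q j) (hqsum : ∑ j, q j = 1) :
    (∃ θ ∈ paramSpace A, q = toricModel A θ) ↔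
      (fun j => Real.log (q j)) ∈
        Submodule.span ℝ (Set.range fun i : Fin m => fun j : Fin n => (A i j : ℝ)) :=
  stmt4_general A q hqpos hqsum
end
end

section
/- A weakly reversible prime reaction network has no critical siphons: if (S, R) is weakly reversible and its associated ideal is prime, then no siphon T ⊆ S is critical. -/
open scoped BigOperators

noncomputable section

/-- A reaction `y → y'` over a species set `S`. -/
abbrev Reaction (S : Type) := (S → ℕ) × (S → ℕ)

variable {S : Type} [Fintype S] [DecidableEq S]

/-- Weak reversibility: every reaction can be reversed by a chain of reactions. -/
def WeaklyReversible (R : Finset (Reaction S)) : Prop :=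
  ∀ r ∈ R, ∃ n : ℕ, ∃ c : Fin (n + 1) → (S → ℕ),
    c 0 = r.2 ∧ c (Fin.last n) = r.1 ∧
    ∀ i : Fin n, (c i.castSucc, c i.succ) ∈ R

/-- The stoichiometric subspace `H`, spanned by the reaction vectors `y' - y`. -/
def stoichSubspace (R : Finset (Reaction S)) : Submodule ℝ (S → ℝ) :=
  Submodule.span ℝ {v | ∃ r ∈ R, v = fun i => ((r.2 i : ℝ) - (r.1 i : ℝ))}

/-- A (nonempty) siphon. -/
def IsSiphon (R : Finset (Reaction S)) (T : Set S) : Prop :=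
  T.Nonempty ∧ ∀ r ∈ R, (∃ i ∈ T, 0 < r.2 i) → ∃ j ∈ T, 0 < r.1 j

/-- A critical siphon: a siphon `T` such that the only nonnegative vector of
    `H^⊥` supported on `T` is `0`. -/
def IsCriticalSiphon (R : Finset (Reaction S)) (T : Set S) : Prop :=
  IsSiphon R T ∧ ∀ v : S → ℝ,
    (∀ h ∈ stoichSubspace R, ∑ i, v i * h i = 0) →
    (∀ i, 0 ≤ v i) → (∀ i, i ∉ T → v i = 0) → v = 0

/-- The associated ideal of a reaction network: the ideal of `ℂ[x_i : i ∈ S]`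
    generated by the binomials `x^y - x^{y'}` for reactions `y → y'`. -/
def associatedIdeal (R : Finset (Reaction S)) : Ideal (MvPolynomial S ℂ) :=
  Ideal.span {f | ∃ r ∈ R,
    f = (∏ i, MvPolynomial.X i ^ r.1 i) - ∏ i, MvPolynomial.X i ^ r.2 i}

/-!
If `T` were a critical siphon, Gordan's alternative would give a vector of the stoichiometric
subspace that is positive on `T`, and by density of the rationals an integer combination `d` of
reaction vectors positive on `T`. Multiplying and adding the binomials of the reactions puts some
`x^a - x^b` with `a - b = d` into the ideal. The ideal vanishes at `(1, …, 1)`, so it contains no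
monomial, and primality cancels the common factor `x^(a ⊓ b)`: `x^u - x^v` lies in the ideal with
`u` positive somewhere on `T` and `v` zero on `T`. At the point that is `0` on `T` and `1` elsewhere
this binomial takes the value `-1`, whereas every generator vanishes there, because by the siphon
property and weak reversibility the source of a reaction meets `T` iff its target does.
-/

open MvPolynomial Set

lemma nonpos_of_forall_nonneg_mul_le {a c : ℝ} (h : ∀ t : ℝ, 0 ≤ t → t * a ≤ c) :
    a ≤ 0 := by
  by_contra! ha
  have := h ((|c| + 1) / a) (by positivity)
  rw [div_mul_cancel₀ _ ha.ne'] at this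
  linarith [le_abs_self c]

lemma eq_zero_of_forall_mul_le {a c : ℝ} (h : ∀ t : ℝ, t * a ≤ c) : a = 0 :=
  le_antisymm (nonpos_of_forall_nonneg_mul_le fun t _ => h t)
    (neg_nonpos.1 <| nonpos_of_forall_nonneg_mul_le fun t _ => by simpa using h (-t))

/-- Gordan's alternative, relative to a set of coordinates `T`. -/
theorem Submodule.exists_mem_forall_pos_of_forall_nonneg_orthogonal {ι : Type*} [Fintype ι]
    (K : Submodule ℝ (ι → ℝ)) (T : Set ι)
    (hK : ∀ v : ι → ℝ, (∀ k ∈ K, ∑ i, v i * k i = 0) → (∀ i, 0 ≤ v i) →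
      (∀ i, i ∉ T → v i = 0) → v = 0) :
    ∃ k ∈ K, ∀ i ∈ T, 0 < k i := by
  classical
  by_contra! hK'
  have hdisj : Disjoint (T.pi fun _ => Ioi (0 : ℝ)) (K : Set (ι → ℝ)) :=
    Set.disjoint_left.2 fun x hx hxK => by
      obtain ⟨i, hi, hle⟩ := hK' x hxK
      exact (hx i hi).not_ge hle
  -- `v i := -f (e i)` for the separating functional `f` is the forbidden nonnegative vector
  obtain ⟨f, u, hfu, huf⟩ := geometric_hahn_banach_open (convex_pi fun _ _ => convex_Ioi 0)
    (isOpen_set_pi T.toFinite fun _ _ => isOpen_Ioi) K.convex hdisj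
  set e : ι → ι → ℝ := fun i j => if i = j then 1 else 0
  have hf : ∀ x, f x = ∑ i, x i * f (e i) := fun x => by
    simpa using LinearMap.pi_apply_eq_sum_univ f.toLinearMap x
  have hfK : ∀ k ∈ K, f k = 0 := fun k hk =>
    eq_zero_of_forall_mul_le (c := -u) fun t => by
      have := huf _ (K.smul_mem (-t) hk)
      simp only [map_smul, smul_eq_mul] at this
      linarith [neg_mul t (f k)]
  have hu : u ≤ 0 := by simpa using huf 0 K.zero_mem
  have hmove : ∀ i (t : ℝ), (i ∈ T → 0 ≤ t) → t * f (e i) ≤ u - f 1 := by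
    intro i t ht
    have := hfu (1 + t • e i) fun j hj => by
      by_cases hij : i = j
      · subst hij
        simp only [Pi.add_apply, Pi.one_apply, Pi.smul_apply, ↓reduceIte, smul_eq_mul, mul_one,
          mem_Ioi, e]
        linarith [ht hj]
      · simp [e, hij]
    simp only [map_add, map_smul, smul_eq_mul] at this
    linarith
  have hv := hK (fun i => -f (e i))
    (fun k hk => by
      simp only [mul_neg, Finset.sum_neg_distrib, mul_comm, ← hf, hfK k hk, neg_zero])
    (fun i => neg_nonneg.2 <| nonpos_of_forall_nonneg_mul_le fun t ht => hmove i t fun _ => ht)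
    (fun i hi => neg_eq_zero.2 <| eq_zero_of_forall_mul_le fun t => hmove i t fun h => absurd h hi)
  have h1 : f 1 = 0 := by
    rw [hf]
    exact Finset.sum_eq_zero fun i _ => by simpa using congrFun hv i
  linarith [hfu 1 fun i _ => show (0 : ℝ) < 1 from one_pos]

lemma Rat.exists_pos_nat_mul_eq_int {ι : Type*} [Fintype ι] (q : ι → ℚ) :
    ∃ N : ℕ, 0 < N ∧ ∃ m : ι → ℤ, ∀ k, (N : ℚ) * q k = m k := by
  refine ⟨∏ k, (q k).den, Finset.prod_pos fun k _ => (q k).pos,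
    fun k => ((∏ k', (q k').den) / (q k).den : ℕ) * (q k).num, fun k => ?_⟩
  obtain ⟨e, he⟩ := Finset.dvd_prod_of_mem (fun k => (q k).den) (Finset.mem_univ k)
  simp only [he, Nat.mul_div_cancel_left _ (q k).pos]
  push_cast
  rw [← Rat.den_mul_eq_num]
  ring

theorem exists_mem_closure_forall_pos_of_mem_span {ι σ : Type*} [Fintype ι]
    (v : ι → σ → ℤ) (T : Set σ) (hT : T.Finite)
    (h : ∃ x ∈ Submodule.span ℝ (Set.range fun k i => (v k i : ℝ)), ∀ i ∈ T, 0 < x i) :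
    ∃ d ∈ AddSubgroup.closure (Set.range v), ∀ i ∈ T, 0 < d i := by
  obtain ⟨x, hx, hxT⟩ := h
  obtain ⟨c, rfl⟩ := (Submodule.mem_span_range_iff_exists_fun ℝ).1 hx
  set g : (ι → ℝ) → σ → ℝ := fun c => ∑ k, c k • fun i => (v k i : ℝ)
  have hopen : IsOpen (g ⁻¹' T.pi fun _ => Ioi 0) :=
    (isOpen_set_pi hT fun _ _ => isOpen_Ioi).preimage (by fun_prop)
  obtain ⟨q, hq⟩ :=
    (DenseRange.piMap fun _ => Rat.denseRange_cast).exists_mem_open hopen ⟨c, hxT⟩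
  obtain ⟨N, hN, m, hm⟩ := Rat.exists_pos_nat_mul_eq_int q
  refine ⟨∑ k, m k • v k, AddSubgroup.sum_mem _ fun k _ =>
    AddSubgroup.zsmul_mem _ (AddSubgroup.subset_closure (Set.mem_range_self k)) _, fun i hi => ?_⟩
  have hd : ((∑ k, m k • v k) i : ℝ) = N * g (Pi.map (fun _ => Rat.cast) q) i := by
    simp only [g, Finset.sum_apply, Pi.smul_apply, smul_eq_mul, Finset.mul_sum, Pi.map_apply]
    push_cast
    refine Finset.sum_congr rfl fun k _ => ?_
    rw [← mul_assoc, ← Rat.cast_natCast, ← Rat.cast_mul, hm k, Rat.cast_intCast]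
  exact_mod_cast hd ▸ mul_pos (Nat.cast_pos.2 hN) (hq i hi)

namespace MvPolynomial

variable {σ R : Type*} [Fintype σ] [CommRing R]

def xPow (a : σ → ℕ) : MvPolynomial σ R := ∏ i, X i ^ a i

lemma xPow_add (a b : σ → ℕ) : (xPow (a + b) : MvPolynomial σ R) = xPow a * xPow b := by
  simp only [xPow, Pi.add_apply, pow_add, Finset.prod_mul_distrib]

lemma eval_xPow (z : σ → R) (a : σ → ℕ) : eval z (xPow a) = ∏ i, z i ^ a i := by
  simp [xPow, map_prod]

def binomialExponents (I : Ideal (MvPolynomial σ R)) : AddSubgroup (σ → ℤ) where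
  carrier := {d | ∃ a b : σ → ℕ, (fun i => (a i : ℤ) - b i) = d ∧ xPow a - xPow b ∈ I}
  zero_mem' := ⟨0, 0, by ext; simp, by simp⟩
  add_mem' := by
    rintro _ _ ⟨a, b, rfl, hab⟩ ⟨a', b', rfl, hab'⟩
    refine ⟨a + a', b + b', by ext; simp only [Pi.add_apply]; push_cast; ring, ?_⟩
    convert I.add_mem (I.mul_mem_left (xPow a') hab) (I.mul_mem_left (xPow b) hab') using 1
    rw [xPow_add, xPow_add]
    ring
  neg_mem' := by
    rintro _ ⟨a, b, rfl, hab⟩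
    exact ⟨b, a, by ext; simp, by simpa using I.neg_mem hab⟩

lemma xPow_tsub_sub_xPow_tsub_mem {I : Ideal (MvPolynomial σ R)} (hI : I.IsPrime)
    (hmon : ∀ c, xPow c ∉ I) {a b : σ → ℕ} (h : xPow a - xPow b ∈ I) :
    xPow (a - b) - xPow (b - a) ∈ I := by
  have hfac : (xPow a - xPow b : MvPolynomial σ R) =
      xPow (a ⊓ b) * (xPow (a - b) - xPow (b - a)) := by
    rw [mul_sub, ← xPow_add, ← xPow_add]
    congr 2 <;> ext i <;> simp only [Pi.add_apply, Pi.inf_apply, Pi.sub_apply] <;> omega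
  rw [hfac] at h
  exact (hI.mem_or_mem h).resolve_left (hmon _)

end MvPolynomial

open Classical in
lemma prod_indicator_compl_pow {σ : Type*} [Fintype σ] (T : Set σ) (a : σ → ℕ) :
    ∏ i, (Tᶜ.indicator 1 i : ℂ) ^ a i = if ∃ i ∈ T, 0 < a i then 0 else 1 := by
  split_ifs with h
  · obtain ⟨i, hi, ha⟩ := h
    exact Finset.prod_eq_zero (Finset.mem_univ i) (by simp [hi, ha.ne'])
  · push Not at h
    refine Finset.prod_eq_one fun i _ => ?_
    by_cases hi : i ∈ T
    · simp [Nat.le_zero.1 (h i hi)]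
    · simp [hi]

lemma WeaklyReversible.imp_of_forall {σ : Type} {R : Finset (Reaction σ)}
    (hR : WeaklyReversible R) {P : (σ → ℕ) → Prop} (hP : ∀ r ∈ R, P r.2 → P r.1)
    {r : Reaction σ} (hr : r ∈ R) (h : P r.1) : P r.2 := by
  obtain ⟨n, c, hc0, hcn, hc⟩ := hR r hr
  rw [← hc0]
  exact Fin.reverseInduction (motive := fun i => P (c i)) (hcn ▸ h) (fun i => hP _ (hc i)) 0

section ReactionNetwork

variable {σ : Type}

def reactionVector (r : Reaction σ) : σ → ℤ := fun i => r.2 i - r.1 i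

lemma stoichSubspace_eq_span_reactionVector (R : Finset (Reaction σ)) :
    stoichSubspace R =
      Submodule.span ℝ (Set.range fun (r : R) i => (reactionVector r.1 i : ℝ)) := by
  rw [stoichSubspace]
  congr 1
  ext v
  simp [reactionVector, eq_comm]

variable [Fintype σ]

lemma closure_reactionVector_le_binomialExponents (R : Finset (Reaction σ)) :
    AddSubgroup.closure (Set.range fun r : R => reactionVector r.1) ≤
      binomialExponents (associatedIdeal R) := by
  rw [AddSubgroup.closure_le]
  rintro _ ⟨r, rfl⟩
  exact ⟨r.1.2, r.1.1, rfl, by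
    simpa [xPow] using (associatedIdeal R).neg_mem (Ideal.subset_span ⟨r, r.2, rfl⟩)⟩

lemma associatedIdeal_le_ker_eval (R : Finset (Reaction σ)) (z : σ → ℂ)
    (hz : ∀ r ∈ R, ∏ i, z i ^ r.1 i = ∏ i, z i ^ r.2 i) :
    associatedIdeal R ≤ RingHom.ker (eval z) := by
  rw [associatedIdeal, Ideal.span_le]
  rintro _ ⟨r, hr, rfl⟩
  simp [hz r hr]

lemma xPow_notMem_associatedIdeal (R : Finset (Reaction σ)) (a : σ → ℕ) :
    xPow a ∉ associatedIdeal R := fun h => by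
  simpa [eval_xPow] using associatedIdeal_le_ker_eval R 1 (by simp) h

lemma associatedIdeal_le_ker_eval_indicator_compl {R : Finset (Reaction σ)}
    (hR : WeaklyReversible R) {T : Set σ}
    (hT : ∀ r ∈ R, (∃ i ∈ T, 0 < r.2 i) → ∃ j ∈ T, 0 < r.1 j) :
    associatedIdeal R ≤ RingHom.ker (eval (Tᶜ.indicator 1)) := by
  classical
  refine associatedIdeal_le_ker_eval R _ fun r hr => ?_
  rw [prod_indicator_compl_pow, prod_indicator_compl_pow]
  exact if_congr ⟨hR.imp_of_forall (P := fun y => ∃ i ∈ T, 0 < y i) hT hr, hT r hr⟩ rfl rfl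

end ReactionNetwork

theorem stmt6 (R : Finset (Reaction S)) (hwr : WeaklyReversible R)
    (hprime : (associatedIdeal R).IsPrime) :
    ∀ T : Set S, ¬ IsCriticalSiphon R T := by
  classical
  rintro T ⟨⟨⟨i₀, hi₀⟩, hsiphon⟩, hcrit⟩
  obtain ⟨d, hd, hdT⟩ := exists_mem_closure_forall_pos_of_mem_span _ T T.toFinite <| by
    rw [← stoichSubspace_eq_span_reactionVector]
    exact (stoichSubspace R).exists_mem_forall_pos_of_forall_nonneg_orthogonal T hcrit
  obtain ⟨a, b, rfl, hab⟩ := closure_reactionVector_le_binomialExponents R hd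
  have hbaT : ∀ i ∈ T, b i < a i := fun i hi => by have := hdT i hi; dsimp only at this; omega
  have h := associatedIdeal_le_ker_eval_indicator_compl hwr hsiphon <|
    xPow_tsub_sub_xPow_tsub_mem hprime (xPow_notMem_associatedIdeal R) hab
  rw [RingHom.mem_ker, map_sub, eval_xPow, eval_xPow, prod_indicator_compl_pow,
    prod_indicator_compl_pow, if_pos ⟨i₀, hi₀, by simp [hbaT i₀ hi₀]⟩,
    if_neg (by simpa using fun i hi => (hbaT i hi).le)] at h
  exact zero_ne_one (sub_eq_zero.1 h)
end
end

section
/- Let (S, R, k) be a reversible detailed balanced reaction system with no critical siphons and point of detailed balance α, and fix u ∈ ℝ^S_{>0}. Then the unique minimizer β of g(x) := ∑_{i∈S} (x_i log x_i − x_i − x_i log α_i) over (u + H) ∩ ℝ^S_{≥0} is itself a point of detailed balance of (S, R, k). -/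
/- STATEMENT 10: For a reversible detailed balanced reaction system with no
   critical siphons and point of detailed balance α, the unique minimizer β of
   g over (u + H) ∩ ℝ^S_{≥0} is itself a point of detailed balance. -/
open scoped BigOperators

noncomputable section

variable {S : Type} [Fintype S] [DecidableEq S]

/-- The mass-action vector field `∑_{y→y'∈R} k_{y→y'} x^y (y' - y)`. -/
def massActionVF (R : Finset (Reaction S)) (k : Reaction S → ℝ) (x : S → ℝ) :
    S → ℝ :=
  fun i => ∑ r ∈ R, k r * (∏ i', x i' ^ r.1 i') * ((r.2 i : ℝ) - (r.1 i : ℝ))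

/-- `x : [0,∞) → ℝ^S_{≥0}` solves the mass-action equations. -/
def IsMassActionSolution (R : Finset (Reaction S)) (k : Reaction S → ℝ)
    (x : ℝ → S → ℝ) : Prop :=
  (∀ t ∈ Set.Ici (0 : ℝ), ∀ i, 0 ≤ x t i) ∧
  ∀ t ∈ Set.Ici (0 : ℝ), HasDerivWithinAt x (massActionVF R k (x t)) (Set.Ici 0) t

/-- `α ∈ ℝ^S_{>0}` is a point of complex balance. -/
def IsComplexBalancePoint (R : Finset (Reaction S)) (k : Reaction S → ℝ)
    (α : S → ℝ) : Prop :=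
  (∀ i, 0 < α i) ∧ ∀ y : S → ℕ, ∀ i : S,
    (∑ r ∈ R.filter (fun r => r.1 = y),
        k r * (∏ i', α i' ^ y i') * ((r.2 i : ℝ) - (y i : ℝ))) =
    ∑ r ∈ R.filter (fun r => r.2 = y),
        k r * (∏ i', α i' ^ r.1 i') * ((y i : ℝ) - (r.1 i : ℝ))

/-- Reversibility: `y → y' ∈ R` implies `y' → y ∈ R`. -/
def Reversible (R : Finset (Reaction S)) : Prop := ∀ r ∈ R, (r.2, r.1) ∈ R

/-- `α ∈ ℝ^S_{>0}` is a point of detailed balance. -/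
def IsDetailedBalancePoint (R : Finset (Reaction S)) (k : Reaction S → ℝ)
    (α : S → ℝ) : Prop :=
  Reversible R ∧ (∀ i, 0 < α i) ∧
  ∀ r ∈ R, k r * ∏ i, α i ^ r.1 i = k (r.2, r.1) * ∏ i, α i ^ r.2 i

/-- The Lyapunov function `g(x) = ∑ᵢ (xᵢ log xᵢ - xᵢ - xᵢ log αᵢ)`
    (convention `0 log 0 = 0`, which holds since `Real.log 0 = 0`). -/
def lyap (α x : S → ℝ) : ℝ :=
  ∑ i, (x i * Real.log (x i) - x i - x i * Real.log (α i))


/-! The minimizer `β` is positive. Otherwise its zero set `T` is not a siphon: a siphon `T`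
would be critical, since a nonnegative conservation law `w` supported on `T` satisfies
`w · u = w · β = 0`. So some reaction `y → y'` has `y = 0` on `T` and `y' ≠ 0` on `T`, and
moving `β` along `y' - y` lowers `g`, because `x log x` has slope `-∞` at `0`.
Being interior, `β` satisfies Fermat's rule `log β - log α ⊥ H`, i.e.
`β^{y'} α^y = β^y α^{y'}` for every reaction, which transfers detailed balance from `α`
to `β`. -/

open Filter Topology

def lyapTerm (a x : ℝ) : ℝ := x * Real.log x - x - x * Real.log a

/-- The nonnegative compatibility class `(u + H) ∩ ℝ^ι_{≥0}`. -/
def compatClass {ι : Type} (H : Submodule ℝ (ι → ℝ)) (u : ι → ℝ) : Set (ι → ℝ) :=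
  {z | (∀ i, 0 ≤ z i) ∧ z - u ∈ H}

lemma add_mem_compatClass {ι : Type} {H : Submodule ℝ (ι → ℝ)} {u z v : ι → ℝ}
    (hz : z ∈ compatClass H u) (hv : v ∈ H) (hnonneg : ∀ i, 0 ≤ z i + v i) :
    z + v ∈ compatClass H u := by
  refine ⟨hnonneg, ?_⟩
  rw [add_sub_right_comm]
  exact H.add_mem hz.2 hv

section

variable {ι : Type} [Fintype ι]

lemma lyap_eq_sum_lyapTerm (α x : ι → ℝ) : lyap α x = ∑ i, lyapTerm (α i) (x i) := rfl

lemma hasDerivAt_lyapTerm_line (a v : ℝ) {b : ℝ} (hb : b ≠ 0) :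
    HasDerivAt (fun ε => lyapTerm a (b + ε * v)) (v * (Real.log b - Real.log a)) 0 := by
  have hline : HasDerivAt (fun ε : ℝ => b + ε * v) v 0 := by
    simpa using ((hasDerivAt_id (0 : ℝ)).mul_const v).const_add b
  have hmulLog : HasDerivAt (fun x => x * Real.log x) (Real.log b + 1) (b + 0 * v) := by
    simpa using Real.hasDerivAt_mul_log hb
  rw [show v * (Real.log b - Real.log a) = (Real.log b + 1) * v - v - v * Real.log a by ring]
  exact ((hmulLog.comp 0 hline).fun_sub hline).fun_sub (hline.mul_const (Real.log a))

lemma lyapTerm_mul (a : ℝ) {ε : ℝ} (hε : ε ≠ 0) (v : ℝ) :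
    lyapTerm a (ε * v) = ε * (v * Real.log ε + lyapTerm a v) := by
  rcases eq_or_ne v 0 with rfl | hv
  · simp [lyapTerm]
  · rw [lyapTerm, lyapTerm, Real.log_mul hε hv]
    ring

lemma slope_lyapTerm_line_of_eq_zero (a v : ℝ) {b : ℝ} (hb : b = 0) {ε : ℝ} (hε : ε ≠ 0) :
    slope (fun ε => lyapTerm a (b + ε * v)) 0 ε = v * Real.log ε + lyapTerm a v := by
  subst hb
  rw [slope_def_field, zero_add, lyapTerm_mul a hε]
  simp [lyapTerm, hε]

lemma tendsto_slope_lyapTerm_line_atBot (a : ℝ) {b v : ℝ} (hb : b = 0) (hv : 0 < v) :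
    Tendsto (slope (fun ε => lyapTerm a (b + ε * v)) 0) (𝓝[>] 0) atBot := by
  refine (tendsto_atBot_add_const_right _ (lyapTerm a v)
    (Real.tendsto_log_nhdsGT_zero.const_mul_atBot hv)).congr' ?_
  filter_upwards [self_mem_nhdsWithin] with ε (hε : 0 < ε)
  rw [slope_lyapTerm_line_of_eq_zero a v hb hε.ne']

lemma exists_eventually_slope_lyapTerm_line_le (a : ℝ) {b v : ℝ} (hb : 0 ≤ b)
    (hv : b = 0 → 0 ≤ v) :
    ∃ M, ∀ᶠ ε in 𝓝[>] 0, slope (fun ε => lyapTerm a (b + ε * v)) 0 ε ≤ M := by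
  rcases hb.eq_or_lt with hb | hb
  · refine ⟨lyapTerm a v, ?_⟩
    filter_upwards [Ioo_mem_nhdsGT one_pos] with ε ⟨hε0, hε1⟩
    rw [slope_lyapTerm_line_of_eq_zero a v hb.symm hε0.ne']
    nlinarith [Real.log_neg hε0 hε1, hv hb.symm]
  · have hderiv := hasDerivAt_lyapTerm_line a v hb.ne'
    exact ⟨_, (hasDerivAt_iff_tendsto_slope_left_right.mp hderiv).2.eventually
      (eventually_le_nhds (lt_add_one _))⟩

lemma eventually_nonneg_line {b v : ℝ} (hb : 0 ≤ b) (hv : b = 0 → 0 ≤ v) :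
    ∀ᶠ ε in 𝓝[>] 0, 0 ≤ b + ε * v := by
  rcases hb.eq_or_lt with hb | hb
  · filter_upwards [self_mem_nhdsWithin] with ε (hε : 0 < ε)
    rw [← hb, zero_add]
    exact mul_nonneg hε.le (hv hb.symm)
  · have hcont : Tendsto (fun ε : ℝ => b + ε * v) (𝓝[>] 0) (𝓝 b) :=
      tendsto_nhdsWithin_of_tendsto_nhds <|
        (by fun_prop : Continuous fun ε : ℝ => b + ε * v).tendsto' 0 b (by simp)
    exact (hcont.eventually (eventually_gt_nhds hb)).mono fun _ h => h.le

lemma slope_lyap_line (α β v : ι → ℝ) :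
    slope (fun ε : ℝ => lyap α (β + ε • v)) 0 =
      fun ε => ∑ i, slope (fun ε => lyapTerm (α i) (β i + ε * v i)) 0 ε := by
  funext ε
  simp only [slope_def_field, lyap_eq_sum_lyapTerm, Pi.add_apply, Pi.smul_apply, smul_eq_mul,
    ← Finset.sum_sub_distrib, Finset.sum_div]

/-- The coordinates vanishing at `β` contribute `ε v_i log ε` to `lyap α (β + ε v)`, which
beats the `O(ε)` change of the others. -/
lemma exists_lyap_line_lt (α : ι → ℝ) {β v : ι → ℝ} (hβ : ∀ i, 0 ≤ β i)
    (hv : ∀ i, β i = 0 → 0 ≤ v i) {i₀ : ι} (hβi₀ : β i₀ = 0) (hvi₀ : 0 < v i₀) :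
    ∃ ε > 0, (∀ i, 0 ≤ β i + ε * v i) ∧ lyap α (β + ε • v) < lyap α β := by
  classical
  choose M hM using fun i => exists_eventually_slope_lyapTerm_line_le (α i) (hβ i) (hv i)
  have hslope : Tendsto (slope (fun ε : ℝ => lyap α (β + ε • v)) 0) (𝓝[>] 0) atBot := by
    rw [slope_lyap_line]
    simp only [← Finset.add_sum_erase _ _ (Finset.mem_univ i₀)]
    refine tendsto_atBot_add_right_of_ge' _ (∑ i ∈ Finset.univ.erase i₀, M i)
      (tendsto_slope_lyapTerm_line_atBot (α i₀) hβi₀ hvi₀) ?_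
    filter_upwards [(eventually_all_finset _).2 fun i _ => hM i] with ε hε
    exact Finset.sum_le_sum hε
  obtain ⟨ε, hneg, hnonneg, hε⟩ := ((hslope.eventually_lt_atBot 0).and
    ((eventually_all.2 fun i => eventually_nonneg_line (hβ i) (hv i)).and
      self_mem_nhdsWithin)).exists
  refine ⟨ε, hε, hnonneg, ?_⟩
  rw [slope_def_field, sub_zero, div_neg_iff] at hneg
  simpa using (hneg.resolve_left fun h => lt_asymm hε h.2).1

lemma sum_mul_log_sub_log_eq_zero {H : Submodule ℝ (ι → ℝ)} {α u β : ι → ℝ}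
    (hβpos : ∀ i, 0 < β i) (hβ : β ∈ compatClass H u)
    (hmin : IsMinOn (lyap α) (compatClass H u) β) {v : ι → ℝ} (hv : v ∈ H) :
    ∑ i, v i * (Real.log (β i) - Real.log (α i)) = 0 := by
  have hderiv : HasDerivAt (fun ε : ℝ => lyap α (β + ε • v))
      (∑ i, v i * (Real.log (β i) - Real.log (α i))) 0 := by
    simp only [lyap_eq_sum_lyapTerm, Pi.add_apply, Pi.smul_apply, smul_eq_mul]
    exact HasDerivAt.fun_sum fun i _ => hasDerivAt_lyapTerm_line (α i) (v i) (hβpos i).ne'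
  have hpos : ∀ᶠ ε in 𝓝 (0 : ℝ), ∀ i, 0 ≤ β i + ε * v i := by
    refine eventually_all.2 fun i => ?_
    have hcont : Tendsto (fun ε : ℝ => β i + ε * v i) (𝓝 0) (𝓝 (β i)) :=
      (by fun_prop : Continuous fun ε : ℝ => β i + ε * v i).tendsto' 0 (β i) (by simp)
    exact (hcont.eventually (eventually_gt_nhds (hβpos i))).mono fun _ h => h.le
  have hlocal : IsLocalMin (fun ε : ℝ => lyap α (β + ε • v)) 0 := by
    filter_upwards [hpos] with ε hε
    simpa using hmin (add_mem_compatClass hβ (H.smul_mem ε hv) hε)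
  exact hlocal.hasDerivAt_eq_zero hderiv

lemma prod_pow_eq_exp_sum_mul_log {x : ι → ℝ} (hx : ∀ i, 0 < x i) (y : ι → ℕ) :
    ∏ i, x i ^ y i = Real.exp (∑ i, (y i : ℝ) * Real.log (x i)) := by
  rw [Real.exp_sum]
  exact Finset.prod_congr rfl fun i _ => by rw [Real.exp_nat_mul, Real.exp_log (hx i)]

lemma prod_pow_mul_prod_pow_comm {a b : ι → ℝ} (ha : ∀ i, 0 < a i) (hb : ∀ i, 0 < b i)
    {y y' : ι → ℕ} (h : ∑ i, ((y' i : ℝ) - y i) * (Real.log (b i) - Real.log (a i)) = 0) :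
    (∏ i, b i ^ y i) * ∏ i, a i ^ y' i = (∏ i, b i ^ y' i) * ∏ i, a i ^ y i := by
  simp only [prod_pow_eq_exp_sum_mul_log ha, prod_pow_eq_exp_sum_mul_log hb, ← Real.exp_add]
  congr 1
  simp only [sub_mul, mul_sub, Finset.sum_sub_distrib] at h
  linarith

lemma isCriticalSiphon_zeroSet {R : Finset (Reaction ι)} {u β : ι → ℝ} (hu : ∀ i, 0 < u i)
    (hβ : β - u ∈ stoichSubspace R) (hsiphon : IsSiphon R {i | β i = 0}) :
    IsCriticalSiphon R {i | β i = 0} := by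
  refine ⟨hsiphon, fun w hw hw0 hwT => ?_⟩
  have hwβ : ∑ i, w i * β i = 0 := Finset.sum_eq_zero fun i _ => by
    by_cases hi : β i = 0
    · rw [hi, mul_zero]
    · rw [hwT i hi, zero_mul]
  have hwu : ∑ i, w i * u i = 0 := by
    have := hw _ hβ
    simp only [Pi.sub_apply, mul_sub, Finset.sum_sub_distrib] at this
    linarith
  rw [Finset.sum_eq_zero_iff_of_nonneg fun i _ => mul_nonneg (hw0 i) (hu i).le] at hwu
  funext i
  simpa [(hu i).ne'] using hwu i (Finset.mem_univ i)

lemma pos_of_isMinOn_lyap {R : Finset (Reaction ι)} {α u β : ι → ℝ}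
    (hnocrit : ∀ T : Set ι, ¬ IsCriticalSiphon R T) (hu : ∀ i, 0 < u i)
    (hβ : β ∈ compatClass (stoichSubspace R) u)
    (hmin : IsMinOn (lyap α) (compatClass (stoichSubspace R) u) β) (i : ι) : 0 < β i := by
  by_contra! hi
  have hβi : β i = 0 := le_antisymm hi (hβ.1 i)
  have hnotSiphon : ¬ IsSiphon R {j | β j = 0} :=
    fun h => hnocrit _ (isCriticalSiphon_zeroSet hu hβ.2 h)
  simp only [IsSiphon, not_and, not_forall, exists_prop, not_exists, not_lt,
    Set.mem_ofPred_eq] at hnotSiphon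
  obtain ⟨r, hr, ⟨i₀, hβi₀, hri₀⟩, hr1⟩ := hnotSiphon ⟨i, hβi⟩
  set v : ι → ℝ := fun j => (r.2 j : ℝ) - r.1 j
  have hvH : v ∈ stoichSubspace R := Submodule.subset_span ⟨r, hr, rfl⟩
  have hv : ∀ j, β j = 0 → 0 ≤ v j := fun j hj => by
    simp [v, Nat.le_zero.mp (hr1 j hj)]
  have hvi₀ : 0 < v i₀ := by
    simp [v, Nat.le_zero.mp (hr1 i₀ hβi₀), hri₀]
  obtain ⟨ε, -, hnonneg, hlt⟩ := exists_lyap_line_lt α hβ.1 hv hβi₀ hvi₀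
  exact (hmin (add_mem_compatClass hβ ((stoichSubspace R).smul_mem ε hvH) hnonneg)).not_gt hlt

lemma IsDetailedBalancePoint.of_sum_mul_log_sub_log_eq_zero {R : Finset (Reaction ι)}
    {k : Reaction ι → ℝ} {α β : ι → ℝ} (hα : IsDetailedBalancePoint R k α)
    (hβ : ∀ i, 0 < β i)
    (horth : ∀ v ∈ stoichSubspace R, ∑ i, v i * (Real.log (β i) - Real.log (α i)) = 0) :
    IsDetailedBalancePoint R k β := by
  obtain ⟨hrev, hαpos, hbal⟩ := hα
  refine ⟨hrev, hβ, fun r hr => ?_⟩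
  have hcomm :=
    prod_pow_mul_prod_pow_comm hαpos hβ (horth _ (Submodule.subset_span ⟨r, hr, rfl⟩))
  refine mul_right_cancel₀ (b := ∏ i, α i ^ r.1 i)
    (Finset.prod_pos fun i _ => pow_pos (hαpos i) (r.1 i)).ne' ?_
  linear_combination (∏ i, β i ^ r.1 i) * hbal r hr + k (r.2, r.1) * hcomm

end

theorem stmt10_general (R : Finset (Reaction S)) (k : Reaction S → ℝ)
    (α : S → ℝ) (hα : IsDetailedBalancePoint R k α)
    (hnocrit : ∀ T : Set S, ¬ IsCriticalSiphon R T)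
    (u : S → ℝ) (hu : ∀ i, 0 < u i)
    (β : S → ℝ) (hβnn : ∀ i, 0 ≤ β i) (hβmem : β - u ∈ stoichSubspace R)
    (hβmin : ∀ z : S → ℝ, (∀ i, 0 ≤ z i) → z - u ∈ stoichSubspace R →
      lyap α β ≤ lyap α z) :
    IsDetailedBalancePoint R k β := by
  have hβ : β ∈ compatClass (stoichSubspace R) u := ⟨hβnn, hβmem⟩
  have hmin : IsMinOn (lyap α) (compatClass (stoichSubspace R) u) β :=
    fun z hz => hβmin z hz.1 hz.2
  have hpos := pos_of_isMinOn_lyap hnocrit hu hβ hmin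
  exact hα.of_sum_mul_log_sub_log_eq_zero hpos fun v hv =>
    sum_mul_log_sub_log_eq_zero hpos hβ hmin hv

theorem stmt10 (R : Finset (Reaction S)) (k : Reaction S → ℝ)
    (hk : ∀ r ∈ R, 0 < k r) (hrev : Reversible R)
    (α : S → ℝ) (hα : IsDetailedBalancePoint R k α)
    (hnocrit : ∀ T : Set S, ¬ IsCriticalSiphon R T)
    (u : S → ℝ) (hu : ∀ i, 0 < u i)
    (β : S → ℝ) (hβnn : ∀ i, 0 ≤ β i) (hβmem : β - u ∈ stoichSubspace R)
    (hβmin : ∀ z : S → ℝ, (∀ i, 0 ≤ z i) → z - u ∈ stoichSubspace R →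
      lyap α β ≤ lyap α z)
    (hβuniq : ∀ z : S → ℝ, (∀ i, 0 ≤ z i) → z - u ∈ stoichSubspace R →
      (∀ z' : S → ℝ, (∀ i, 0 ≤ z' i) → z' - u ∈ stoichSubspace R →
        lyap α z ≤ lyap α z') → z = β) :
    IsDetailedBalancePoint R k β :=
  stmt10_general R k α hα hnocrit u hu β hβnn hβmem hβmin
end
end
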